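/- arXiv:0911.0848 — 3 statements merged into one kernel-verified Lean document; each statement's English description precedes it below -/
import Mathlib

section
/- If u(x,t) is a smooth real-valued function satisfying u_{xx} - u_{tt} = (1 - (∂_x + ∂_t)²) sin(u), and m(x,t) = 1 + (u_x + u_t)², then the conservation law ∂_t((1 - cos u)√m) = ∂_x((1 + cos u)√m) holds. -/
/-- Partial derivative in the first (x) variable. -/
noncomputable def pdx (f : ℝ → ℝ → ℝ) : ℝ → ℝ → ℝ := fun x t => deriv (fun x' => f x' t) x

/-- Partial derivative in the second (t) variable. -/
noncomputable def pdt (f : ℝ → ℝ → ℝ) : ℝ → ℝ → ℝ := fun x t => deriv (fun t' => f x t') t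

/-- The operator ∂ₓ + ∂ₜ. -/
noncomputable def pdsum (f : ℝ → ℝ → ℝ) : ℝ → ℝ → ℝ := fun x t => pdx f x t + pdt f x t

private lemma pdx_eq_fderiv (F : ℝ × ℝ → ℝ) (hF : Differentiable ℝ F) (x t : ℝ) :
    pdx (fun a b => F (a, b)) x t = fderiv ℝ F (x, t) (1, 0) := by
  have h1 : HasDerivAt (fun x' : ℝ => ((x' : ℝ), t)) ((1 : ℝ), (0 : ℝ)) x :=
    (hasDerivAt_id x).prodMk (hasDerivAt_const x t)
  exact (HasFDerivAt.comp_hasDerivAt (x := x) (hF (x, t)).hasFDerivAt h1).deriv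

private lemma pdt_eq_fderiv (F : ℝ × ℝ → ℝ) (hF : Differentiable ℝ F) (x t : ℝ) :
    pdt (fun a b => F (a, b)) x t = fderiv ℝ F (x, t) (0, 1) := by
  have h1 : HasDerivAt (fun t' : ℝ => (x, (t' : ℝ))) ((0 : ℝ), (1 : ℝ)) t :=
    (hasDerivAt_const t x).prodMk (hasDerivAt_id t)
  exact (HasFDerivAt.comp_hasDerivAt (x := t) (hF (x, t)).hasFDerivAt h1).deriv

private lemma pdsum_eq_fderiv (F : ℝ × ℝ → ℝ) (hF : Differentiable ℝ F) (x t : ℝ) :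
    pdsum (fun a b => F (a, b)) x t = fderiv ℝ F (x, t) (1, 1) := by
  have h : ((1:ℝ),(0:ℝ)) + ((0:ℝ),(1:ℝ)) = ((1:ℝ),(1:ℝ)) := by norm_num
  rw [pdsum, pdx_eq_fderiv F hF, pdt_eq_fderiv F hF, ← map_add, h]


set_option maxHeartbeats 1000000 in
/-- If `u` is a smooth solution of the generalized sine-Gordon equation
`u_{xx} - u_{tt} = (1 - (∂ₓ+∂ₜ)²) sin u` and `m = 1 + (uₓ+uₜ)²`, then the conservation law
`∂ₜ((1 - cos u)√m) = ∂ₓ((1 + cos u)√m)` holds. -/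
theorem conservation_law (u : ℝ → ℝ → ℝ)
    (hu : ContDiff ℝ (⊤ : ℕ∞) (fun q : ℝ × ℝ => u q.1 q.2))
    (m : ℝ → ℝ → ℝ)
    (hm : ∀ x t, m x t = 1 + (pdx u x t + pdt u x t) ^ 2)
    (heq : ∀ x t,
      pdx (pdx u) x t - pdt (pdt u) x t =
        Real.sin (u x t) - pdsum (pdsum (fun x' t' => Real.sin (u x' t'))) x t) :
    ∀ x t,
      pdt (fun x' t' => (1 - Real.cos (u x' t')) * Real.sqrt (m x' t')) x t =
      pdx (fun x' t' => (1 + Real.cos (u x' t')) * Real.sqrt (m x' t')) x t := by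
  intro x t
  set U : ℝ × ℝ → ℝ := fun p => u p.1 p.2 with hUdef
  have hU1 : Differentiable ℝ U := hu.differentiable (by simp)
  set U' : ℝ × ℝ → (ℝ × ℝ) →L[ℝ] ℝ := fderiv ℝ U with hU'def
  have hU'c : ContDiff ℝ (⊤ : ℕ∞) U' := hu.fderiv_right (by simp)
  have hU'd : Differentiable ℝ U' := hU'c.differentiable (by simp)
  set H : ℝ × ℝ → (ℝ × ℝ) →L[ℝ] (ℝ × ℝ) →L[ℝ] ℝ := fderiv ℝ U' with hHdef
  set e1 : ℝ × ℝ := (1, 0) with he1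
  set e2 : ℝ × ℝ := (0, 1) with he2
  set s : ℝ × ℝ := (1, 1) with hsdef
  have hs : e1 + e2 = s := by rw [he1, he2, hsdef, Prod.mk_add_mk]; norm_num
  set q : ℝ × ℝ := (x, t) with hq
  -- directional derivative functions are smooth and have explicit derivatives
  have hdir : ∀ v : ℝ × ℝ, ContDiff ℝ (⊤ : ℕ∞) (fun p => U' p v) :=
    fun v => hU'c.clm_apply contDiff_const
  have hWv : ∀ (v : ℝ × ℝ) (p : ℝ × ℝ),
      HasFDerivAt (fun y => U' y v) ((H p).flip v) p := by
    intro v p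
    have := (hU'd p).hasFDerivAt.clm_apply (hasFDerivAt_const v p)
    simpa using this
  -- symmetry of the second derivative
  have hsym : ∀ v w : ℝ × ℝ, H q v w = H q w v :=
    second_derivative_symmetric (fun y => (hU1 y).hasFDerivAt) ((hU'd q).hasFDerivAt)
  -- first partials of u
  have F1 : ∀ a b, pdx u a b = U' (a, b) e1 := fun a b => pdx_eq_fderiv U hU1 a b
  have F2 : ∀ a b, pdt u a b = U' (a, b) e2 := fun a b => pdt_eq_fderiv U hU1 a b
  have F3 : ∀ a b, pdx u a b + pdt u a b = U' (a, b) s := by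
    intro a b; rw [F1, F2, ← map_add, hs]
  -- second partials of u
  have G1 : pdx (pdx u) x t = H q e1 e1 := by
    have h : pdx u = fun a b => (fun p => U' p e1) (a, b) := by
      funext a b; exact F1 a b
    rw [h, pdx_eq_fderiv _ ((hdir e1).differentiable (by simp)), (hWv e1 q).fderiv]
    rfl
  have G2 : pdt (pdt u) x t = H q e2 e2 := by
    have h : pdt u = fun a b => (fun p => U' p e2) (a, b) := by
      funext a b; exact F2 a b
    rw [h, pdt_eq_fderiv _ ((hdir e2).differentiable (by simp)), (hWv e2 q).fderiv]
    rfl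
  -- the sine composition
  have hsinD : ∀ p, HasFDerivAt (fun y => Real.sin (U y))
      (Real.cos (U p) • U' p) p :=
    fun p => (Real.hasDerivAt_sin (U p)).comp_hasFDerivAt p (hU1 p).hasFDerivAt
  have hsinc : ContDiff ℝ (⊤ : ℕ∞) (fun p => Real.sin (U p)) := Real.contDiff_sin.comp hu
  have F5 : ∀ a b, pdsum (fun x' t' => Real.sin (u x' t')) a b
      = Real.cos (U (a, b)) * U' (a, b) s := by
    intro a b
    have h := pdsum_eq_fderiv (fun p => Real.sin (U p)) (hsinc.differentiable (by simp)) a b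
    rw [show ((1:ℝ),(1:ℝ)) = s from rfl] at h
    rw [h, (hsinD (a, b)).fderiv]
    rfl
  -- g = (∂x+∂t)(sin u) as a function on the plane
  have hgc : ContDiff ℝ (⊤ : ℕ∞) (fun p => Real.cos (U p) * U' p s) :=
    (Real.contDiff_cos.comp hu).mul (hdir s)
  have hgD : HasFDerivAt (fun p => Real.cos (U p) * U' p s)
      (Real.cos (U q) • ((H q).flip s) + (U' q s) • ((-Real.sin (U q)) • U' q)) q := by
    have hcos : HasFDerivAt (fun y => Real.cos (U y)) ((-Real.sin (U q)) • U' q) q :=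
      (Real.hasDerivAt_cos (U q)).comp_hasFDerivAt q (hU1 q).hasFDerivAt
    exact hcos.mul (hWv s q)
  have G3 : pdsum (pdsum (fun x' t' => Real.sin (u x' t'))) x t
      = Real.cos (U q) * (H q s s) + (U' q s) * (-Real.sin (U q) * (U' q s)) := by
    have h : pdsum (fun x' t' => Real.sin (u x' t'))
        = fun a b => (fun p => Real.cos (U p) * U' p s) (a, b) := by
      funext a b; exact F5 a b
    rw [h, pdsum_eq_fderiv _ (hgc.differentiable (by simp)),
      show ((1:ℝ),(1:ℝ)) = s from rfl, hgD.fderiv]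
    simp [mul_comm]
  -- the PDE at q
  have hPDE : H q e1 e1 - H q e2 e2
      = Real.sin (U q) - (Real.cos (U q) * (H q s s)
        + (U' q s) * (-Real.sin (U q) * (U' q s))) := by
    rw [← G1, ← G2, ← G3]; exact heq x t
  -- the flux functions
  have hmf : ∀ a b, m a b = 1 + U' (a, b) s * U' (a, b) s := by
    intro a b; rw [hm a b, F3]; ring
  have hposp : ∀ p : ℝ × ℝ, 0 < 1 + U' p s * U' p s := by
    intro p; nlinarith [mul_self_nonneg (U' p s)]
  have hMder : ∀ p, HasFDerivAt (fun y => 1 + U' y s * U' y s)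
      (U' p s • (H p).flip s + U' p s • (H p).flip s) p :=
    fun p => ((hWv s p).mul (hWv s p)).const_add 1
  have hRder : ∀ p, HasFDerivAt (fun y => Real.sqrt (1 + U' y s * U' y s))
      ((1 / (2 * Real.sqrt (1 + U' p s * U' p s)))
        • (U' p s • (H p).flip s + U' p s • (H p).flip s)) p :=
    fun p => (Real.hasDerivAt_sqrt (hposp p).ne').comp_hasFDerivAt p (hMder p)
  have hcosD : ∀ p, HasFDerivAt (fun y => Real.cos (U y)) ((-Real.sin (U p)) • U' p) p :=
    fun p => (Real.hasDerivAt_cos (U p)).comp_hasFDerivAt p (hU1 p).hasFDerivAt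
  have hPder : ∀ p, HasFDerivAt
      (fun y => (1 - Real.cos (U y)) * Real.sqrt (1 + U' y s * U' y s))
      ((1 - Real.cos (U p)) • ((1 / (2 * Real.sqrt (1 + U' p s * U' p s)))
          • (U' p s • (H p).flip s + U' p s • (H p).flip s))
        + Real.sqrt (1 + U' p s * U' p s) • (-((-Real.sin (U p)) • U' p))) p :=
    fun p => ((hcosD p).const_sub 1).mul (hRder p)
  have hQder : ∀ p, HasFDerivAt
      (fun y => (1 + Real.cos (U y)) * Real.sqrt (1 + U' y s * U' y s))
      ((1 + Real.cos (U p)) • ((1 / (2 * Real.sqrt (1 + U' p s * U' p s)))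
          • (U' p s • (H p).flip s + U' p s • (H p).flip s))
        + Real.sqrt (1 + U' p s * U' p s) • ((-Real.sin (U p)) • U' p)) p :=
    fun p => ((hcosD p).const_add 1).mul (hRder p)
  have hPfun : (fun x' t' => (1 - Real.cos (u x' t')) * Real.sqrt (m x' t'))
      = fun a b => (fun y => (1 - Real.cos (U y)) * Real.sqrt (1 + U' y s * U' y s)) (a, b) := by
    funext a b; rw [hmf a b]
  have hQfun : (fun x' t' => (1 + Real.cos (u x' t')) * Real.sqrt (m x' t'))
      = fun a b => (fun y => (1 + Real.cos (U y)) * Real.sqrt (1 + U' y s * U' y s)) (a, b) := by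
    funext a b; rw [hmf a b]
  rw [hPfun, hQfun,
    pdt_eq_fderiv _ (fun p => ((hPder p).differentiableAt : DifferentiableAt ℝ _ p)) x t,
    pdx_eq_fderiv _ (fun p => ((hQder p).differentiableAt : DifferentiableAt ℝ _ p)) x t,
    show ((x : ℝ), (t : ℝ)) = q from rfl, (hPder q).fderiv, (hQder q).fderiv,
    show ((0:ℝ),(1:ℝ)) = e2 from rfl, show ((1:ℝ),(0:ℝ)) = e1 from rfl]
  simp only [ContinuousLinearMap.add_apply, ContinuousLinearMap.coe_smul',
    Pi.smul_apply, ContinuousLinearMap.flip_apply, ContinuousLinearMap.neg_apply,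
    smul_eq_mul, ContinuousLinearMap.coe_neg', Pi.neg_apply]
  -- scalar abbreviations
  set a := Real.sin (U q) with ha
  set c := Real.cos (U q) with hc
  set w0 := (U' q) s with hw0
  set uu1 := (U' q) e1 with huu1
  set uu2 := (U' q) e2 with huu2
  set h1s := ((H q) e1) s with hh1s
  set h2s := ((H q) e2) s with hh2s
  set h11 := ((H q) e1) e1 with hh11
  set h22 := ((H q) e2) e2 with hh22
  set hss := ((H q) s) s with hhss
  set r := Real.sqrt (1 + w0 * w0) with hr
  have hrpos : 0 < r := Real.sqrt_pos.mpr (hposp q)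
  have hrne : r ≠ 0 := hrpos.ne'
  have hr2 : r ^ 2 = 1 + w0 * w0 := Real.sq_sqrt (hposp q).le
  have hu12 : uu1 + uu2 = w0 := by rw [huu1, huu2, hw0, ← hs, map_add]
  have hssadd : hss = h1s + h2s := by
    rw [hhss, hh1s, hh2s, ← hs]
    simp only [map_add, ContinuousLinearMap.add_apply]
    ring
  have h1s' : h1s = h11 + ((H q) e1) e2 := by rw [hh1s, hh11, ← hs, map_add]
  have h2s' : h2s = ((H q) e2) e1 + h22 := by rw [hh2s, hh22, ← hs, map_add]
  have hsym12 : ((H q) e1) e2 = ((H q) e2) e1 := hsym e1 e2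
  have key : (1 - c) * w0 * h2s + (1 + w0 * w0) * (a * uu2)
      = (1 + c) * w0 * h1s - (1 + w0 * w0) * (a * uu1) := by
    linear_combination ((1 + w0 * w0) * a) * hu12 + (c * w0) * hssadd
      + w0 * h2s' - w0 * h1s' - w0 * hsym12 - w0 * hPDE
  have key2 : (1 - c) * w0 * h2s + r ^ 2 * (a * uu2)
      = (1 + c) * w0 * h1s - r ^ 2 * (a * uu1) := by rw [hr2]; exact key
  have eL : (1 - c) * (1 / (2 * r) * (w0 * h2s + w0 * h2s)) + r * -(-a * uu2)
      = ((1 - c) * w0 * h2s + r ^ 2 * (a * uu2)) / r := by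
    field_simp; ring
  have eR : (1 + c) * (1 / (2 * r) * (w0 * h1s + w0 * h1s)) + r * (-a * uu1)
      = ((1 + c) * w0 * h1s - r ^ 2 * (a * uu1)) / r := by
    field_simp; ring
  rw [eL, eR, key2]
end

section
/- Let u, m : ℝ² → ℝ be smooth with m = 1 + (u_x + u_t)², and define the change of variables (x,t) ↦ (y,η) with y_x = (1/2)(1 - cos u)√m, y_t = (1/2)(1 + cos u)√m, η = (x - t)/2. Then the Jacobian determinant of this map equals -(1/2)√m, which is strictly negative; in particular the map is everywhere a local diffeomorphism. -/
/-- The Jacobian determinant of the change of variables `(x,t) ↦ (y,η) = (p(x,t), (x-t)/2)`,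
with `yₓ = (1/2)(1-cos u)√m`, `yₜ = (1/2)(1+cos u)√m`, equals `-(1/2)√m < 0`.
In particular the map is everywhere a local diffeomorphism (nonvanishing Jacobian). -/
theorem jacobian_determinant (u m p : ℝ → ℝ → ℝ)
    (hu : ContDiff ℝ (⊤ : ℕ∞) (fun q : ℝ × ℝ => u q.1 q.2))
    (hm : ∀ x t, m x t = 1 + (pdx u x t + pdt u x t) ^ 2)
    (hpx : ∀ x t, pdx p x t = (1 / 2) * (1 - Real.cos (u x t)) * Real.sqrt (m x t))
    (hpt : ∀ x t, pdt p x t = (1 / 2) * (1 + Real.cos (u x t)) * Real.sqrt (m x t)) :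
    ∀ x t,
      pdx p x t * pdt (fun x' t' => (x' - t') / 2) x t
        - pdt p x t * pdx (fun x' t' => (x' - t') / 2) x t
        = -(1 / 2) * Real.sqrt (m x t)
      ∧ -(1 / 2) * Real.sqrt (m x t) < 0 := by
  intro x t
  have hmpos : (0:ℝ) < m x t := by
    rw [hm]; positivity
  have hs : (0:ℝ) < Real.sqrt (m x t) := Real.sqrt_pos.mpr hmpos
  have hdt : pdt (fun x' t' => (x' - t') / 2) x t = -(1/2) := by
    simp only [pdt]
    have : (fun t' : ℝ => (x - t') / 2) = fun t' => x / 2 - t' * (1/2) := by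
      funext t'; ring
    rw [this]
    simp [deriv_sub, deriv_mul_const]
  have hdx : pdx (fun x' t' => (x' - t') / 2) x t = 1/2 := by
    simp only [pdx]
    have : (fun x' : ℝ => (x' - t) / 2) = fun x' => x' * (1/2) - t / 2 := by
      funext x'; ring
    rw [this]
    simp [deriv_sub, deriv_mul_const]
  constructor
  · rw [hdt, hdx, hpx, hpt]; ring
  · nlinarith
end

section
/- Suppose u solves u_{xx} - u_{tt} = (1 - (∂_x+∂_t)²) sin u, m = 1 + (u_x+u_t)². Then the a priori singular expression (1+cos u)(m(u_t+u_x)(1-cos u) - m sin u + 2u_{xx} + 2u_{xt})/((1+cos u) m) equals (1 - cos u)(m(u_t+u_x) + u_{tt} + 2u_{tx} + u_{xx})/m, where the latter is manifestly nonsingular. -/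
lemma diffx (g : ℝ → ℝ → ℝ) (hg : Differentiable ℝ (fun q : ℝ × ℝ => g q.1 q.2)) (x t : ℝ) :
    DifferentiableAt ℝ (fun x' => g x' t) x := by
  have : Differentiable ℝ ((fun q : ℝ × ℝ => g q.1 q.2) ∘ (fun x' : ℝ => (x', t))) :=
    hg.comp (differentiable_id.prodMk (differentiable_const t))
  simpa [Function.comp_def] using this.differentiableAt (x := x)

lemma difft (g : ℝ → ℝ → ℝ) (hg : Differentiable ℝ (fun q : ℝ × ℝ => g q.1 q.2)) (x t : ℝ) :
    DifferentiableAt ℝ (fun t' => g x t') t := by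
  have : Differentiable ℝ ((fun q : ℝ × ℝ => g q.1 q.2) ∘ (fun t' : ℝ => (x, t'))) :=
    hg.comp ((differentiable_const x).prodMk differentiable_id)
  simpa [Function.comp_def] using this.differentiableAt (x := t)

lemma hasDerivAt_px (g : ℝ → ℝ → ℝ) (hg : Differentiable ℝ (fun q : ℝ × ℝ => g q.1 q.2)) (x t : ℝ) :
    HasDerivAt (fun x' => g x' t) (pdx g x t) x :=
  (diffx g hg x t).hasDerivAt

lemma hasDerivAt_pt (g : ℝ → ℝ → ℝ) (hg : Differentiable ℝ (fun q : ℝ × ℝ => g q.1 q.2)) (x t : ℝ) :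
    HasDerivAt (fun t' => g x t') (pdt g x t) t :=
  (difft g hg x t).hasDerivAt

lemma px_eq_fderiv (g : ℝ → ℝ → ℝ) (hg : Differentiable ℝ (fun q : ℝ × ℝ => g q.1 q.2)) (x t : ℝ) :
    pdx g x t = fderiv ℝ (fun q : ℝ × ℝ => g q.1 q.2) (x, t) (1, 0) := by
  have hline : HasDerivAt (fun x' : ℝ => (x', t)) ((1 : ℝ), (0 : ℝ)) x :=
    (hasDerivAt_id x).prodMk (hasDerivAt_const x t)
  have h := (hg (x, t)).hasFDerivAt.comp_hasDerivAt x hline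
  exact h.deriv

lemma pt_eq_fderiv (g : ℝ → ℝ → ℝ) (hg : Differentiable ℝ (fun q : ℝ × ℝ => g q.1 q.2)) (x t : ℝ) :
    pdt g x t = fderiv ℝ (fun q : ℝ × ℝ => g q.1 q.2) (x, t) (0, 1) := by
  have hline : HasDerivAt (fun t' : ℝ => (x, t')) ((0 : ℝ), (1 : ℝ)) t :=
    (hasDerivAt_const t x).prodMk (hasDerivAt_id t)
  have h := (hg (x, t)).hasFDerivAt.comp_hasDerivAt t hline
  exact h.deriv

lemma contDiff_px (g : ℝ → ℝ → ℝ) (hg : ContDiff ℝ (⊤ : ℕ∞) (fun q : ℝ × ℝ => g q.1 q.2)) :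
    ContDiff ℝ (⊤ : ℕ∞) (fun q : ℝ × ℝ => pdx g q.1 q.2) := by
  have h1 : ContDiff ℝ (⊤ : ℕ∞) (fun q : ℝ × ℝ => fderiv ℝ (fun q : ℝ × ℝ => g q.1 q.2) q ((1 : ℝ), (0 : ℝ))) :=
    (hg.fderiv_right (by simp)).clm_apply contDiff_const
  have : (fun q : ℝ × ℝ => pdx g q.1 q.2) =
      fun q : ℝ × ℝ => fderiv ℝ (fun q : ℝ × ℝ => g q.1 q.2) q ((1 : ℝ), (0 : ℝ)) := by
    funext q
    exact px_eq_fderiv g (hg.differentiable (by simp)) q.1 q.2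
  rw [this]; exact h1

lemma contDiff_pt (g : ℝ → ℝ → ℝ) (hg : ContDiff ℝ (⊤ : ℕ∞) (fun q : ℝ × ℝ => g q.1 q.2)) :
    ContDiff ℝ (⊤ : ℕ∞) (fun q : ℝ × ℝ => pdt g q.1 q.2) := by
  have h1 : ContDiff ℝ (⊤ : ℕ∞) (fun q : ℝ × ℝ => fderiv ℝ (fun q : ℝ × ℝ => g q.1 q.2) q ((0 : ℝ), (1 : ℝ))) :=
    (hg.fderiv_right (by simp)).clm_apply contDiff_const
  have : (fun q : ℝ × ℝ => pdt g q.1 q.2) =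
      fun q : ℝ × ℝ => fderiv ℝ (fun q : ℝ × ℝ => g q.1 q.2) q ((0 : ℝ), (1 : ℝ)) := by
    funext q
    exact pt_eq_fderiv g (hg.differentiable (by simp)) q.1 q.2
  rw [this]; exact h1

lemma mixed_symm (g : ℝ → ℝ → ℝ) (hg : ContDiff ℝ (⊤ : ℕ∞) (fun q : ℝ × ℝ => g q.1 q.2)) (x t : ℝ) :
    pdt (pdx g) x t = pdx (pdt g) x t := by
  set F : ℝ × ℝ → ℝ := fun q => g q.1 q.2 with hF
  have hFd : Differentiable ℝ F := hg.differentiable (by simp)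
  have hfd : ContDiff ℝ (⊤ : ℕ∞) (fderiv ℝ F) := hg.fderiv_right (by simp)
  have hfdd : DifferentiableAt ℝ (fderiv ℝ F) (x, t) := (hfd.differentiable (by simp)) _
  -- pdx g uncurried equals applied fderiv
  have hpxF : (fun q : ℝ × ℝ => pdx g q.1 q.2) = fun q => fderiv ℝ F q ((1 : ℝ), (0 : ℝ)) := by
    funext q; exact px_eq_fderiv g hFd q.1 q.2
  have hptF : (fun q : ℝ × ℝ => pdt g q.1 q.2) = fun q => fderiv ℝ F q ((0 : ℝ), (1 : ℝ)) := by
    funext q; exact pt_eq_fderiv g hFd q.1 q.2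
  have h1 : pdt (pdx g) x t =
      fderiv ℝ (fun q : ℝ × ℝ => fderiv ℝ F q ((1 : ℝ), (0 : ℝ))) (x, t) ((0 : ℝ), (1 : ℝ)) := by
    have := pt_eq_fderiv (pdx g) ((contDiff_px g hg).differentiable (by simp)) x t
    rw [this, hpxF]
  have h2 : pdx (pdt g) x t =
      fderiv ℝ (fun q : ℝ × ℝ => fderiv ℝ F q ((0 : ℝ), (1 : ℝ))) (x, t) ((1 : ℝ), (0 : ℝ)) := by
    have := px_eq_fderiv (pdt g) ((contDiff_pt g hg).differentiable (by simp)) x t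
    rw [this, hptF]
  have happ : ∀ v w : ℝ × ℝ,
      fderiv ℝ (fun q : ℝ × ℝ => fderiv ℝ F q v) (x, t) w =
        fderiv ℝ (fderiv ℝ F) (x, t) w v := by
    intro v w
    have := fderiv_clm_apply (𝕜 := ℝ) (c := fderiv ℝ F) (u := fun _ => v) hfdd
      (differentiableAt_const v)
    rw [this]
    simp
  rw [h1, h2, happ, happ]
  exact second_derivative_symmetric (fun y => (hFd y).hasFDerivAt) hfdd.hasFDerivAt _ _

section main
variable (u : ℝ → ℝ → ℝ) (hu : ContDiff ℝ (⊤ : ℕ∞) (fun q : ℝ × ℝ => u q.1 q.2))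

include hu in
lemma sin_px (x t : ℝ) :
    pdx (fun a b => Real.sin (u a b)) x t = Real.cos (u x t) * pdx u x t := by
  have h := (Real.hasDerivAt_sin (u x t)).comp x (hasDerivAt_px u (hu.differentiable (by simp)) x t)
  simpa [Function.comp_def, pdx] using h.deriv

include hu in
lemma sin_pt (x t : ℝ) :
    pdt (fun a b => Real.sin (u a b)) x t = Real.cos (u x t) * pdt u x t := by
  have h := (Real.hasDerivAt_sin (u x t)).comp t (hasDerivAt_pt u (hu.differentiable (by simp)) x t)
  simpa [Function.comp_def, pdt] using h.deriv

include hu in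
lemma sin_psum (x t : ℝ) :
    pdsum (fun a b => Real.sin (u a b)) x t
      = Real.cos (u x t) * (pdx u x t + pdt u x t) := by
  simp only [pdsum, sin_px u hu, sin_pt u hu]; ring

include hu in
lemma psum_psum_sin (x t : ℝ) :
    pdsum (pdsum (fun a b => Real.sin (u a b))) x t
      = -Real.sin (u x t) * (pdx u x t + pdt u x t) ^ 2
        + Real.cos (u x t) *
          (pdx (pdx u) x t + pdx (pdt u) x t + pdt (pdx u) x t + pdt (pdt u) x t) := by
  have hud : Differentiable ℝ (fun q : ℝ × ℝ => u q.1 q.2) := hu.differentiable (by simp)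
  have hpxd : Differentiable ℝ (fun q : ℝ × ℝ => pdx u q.1 q.2) :=
    (contDiff_px u hu).differentiable (by simp)
  have hptd : Differentiable ℝ (fun q : ℝ × ℝ => pdt u q.1 q.2) :=
    (contDiff_pt u hu).differentiable (by simp)
  -- x derivative of pdsum sin u
  have hx1 : HasDerivAt (fun x' => Real.cos (u x' t)) (-Real.sin (u x t) * pdx u x t) x :=
    by have := (Real.hasDerivAt_cos (u x t)).comp x (hasDerivAt_px u hud x t); exact this
  have hx2 : HasDerivAt (fun x' => pdx u x' t + pdt u x' t)
      (pdx (pdx u) x t + pdx (pdt u) x t) x :=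
    (hasDerivAt_px (pdx u) hpxd x t).add (hasDerivAt_px (pdt u) hptd x t)
  have hx3 := hx1.mul hx2
  have hx4 : HasDerivAt (fun x' => pdsum (fun a b => Real.sin (u a b)) x' t)
      (-Real.sin (u x t) * pdx u x t * (pdx u x t + pdt u x t)
        + Real.cos (u x t) * (pdx (pdx u) x t + pdx (pdt u) x t)) x := by
    refine hx3.congr_of_eventuallyEq ?_
    exact Filter.Eventually.of_forall fun x' => sin_psum u hu x' t
  -- t derivative of pdsum sin u
  have ht1 : HasDerivAt (fun t' => Real.cos (u x t')) (-Real.sin (u x t) * pdt u x t) t :=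
    by have := (Real.hasDerivAt_cos (u x t)).comp t (hasDerivAt_pt u hud x t); exact this
  have ht2 : HasDerivAt (fun t' => pdx u x t' + pdt u x t')
      (pdt (pdx u) x t + pdt (pdt u) x t) t :=
    (hasDerivAt_pt (pdx u) hpxd x t).add (hasDerivAt_pt (pdt u) hptd x t)
  have ht3 := ht1.mul ht2
  have ht4 : HasDerivAt (fun t' => pdsum (fun a b => Real.sin (u a b)) x t')
      (-Real.sin (u x t) * pdt u x t * (pdx u x t + pdt u x t)
        + Real.cos (u x t) * (pdt (pdx u) x t + pdt (pdt u) x t)) t := by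
    refine ht3.congr_of_eventuallyEq ?_
    exact Filter.Eventually.of_forall fun t' => sin_psum u hu x t'
  have h1 : pdx (pdsum (fun a b => Real.sin (u a b))) x t = _ := hx4.deriv
  have h2 : pdt (pdsum (fun a b => Real.sin (u a b))) x t = _ := ht4.deriv
  show pdx _ x t + pdt _ x t = _
  rw [h1, h2]; ring

end main

/-- For a smooth solution `u` of `u_{xx} - u_{tt} = (1 - (∂ₓ+∂ₜ)²) sin u`, with
`m = 1 + (uₓ+uₜ)²`, at points where `cos u ≠ -1` the a priori singular expression
`(1+cos u)(m(uₜ+uₓ)(1-cos u) - m sin u + 2u_{xx} + 2u_{xt})/((1+cos u)m)` equals the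
manifestly nonsingular `(1-cos u)(m(uₜ+uₓ) + u_{tt} + 2u_{tx} + u_{xx})/m`. -/
theorem regularized_W_entry (u : ℝ → ℝ → ℝ)
    (hu : ContDiff ℝ (⊤ : ℕ∞) (fun q : ℝ × ℝ => u q.1 q.2))
    (m : ℝ → ℝ → ℝ)
    (hm : ∀ x t, m x t = 1 + (pdx u x t + pdt u x t) ^ 2)
    (heq : ∀ x t,
      pdx (pdx u) x t - pdt (pdt u) x t =
        Real.sin (u x t) - pdsum (pdsum (fun x' t' => Real.sin (u x' t'))) x t) :
    ∀ x t, Real.cos (u x t) ≠ -1 →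
      (1 + Real.cos (u x t)) *
          (m x t * (pdt u x t + pdx u x t) * (1 - Real.cos (u x t))
            - m x t * Real.sin (u x t) + 2 * pdx (pdx u) x t + 2 * pdt (pdx u) x t)
          / ((1 + Real.cos (u x t)) * m x t)
        = (1 - Real.cos (u x t)) *
            (m x t * (pdt u x t + pdx u x t) + pdt (pdt u) x t + 2 * pdx (pdt u) x t
              + pdx (pdx u) x t) / m x t := by
  intro x t hc
  have h1c : 1 + Real.cos (u x t) ≠ 0 := by
    intro h; apply hc; linarith
  have hrel := heq x t
  rw [psum_psum_sin u hu x t, mixed_symm u hu x t] at hrel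
  rw [mixed_symm u hu x t, mul_div_mul_left _ _ h1c]
  congr 1
  rw [hm x t]
  linear_combination hrel
end
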